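/- arXiv:1509.08010 — 6 statements merged into one kernel-verified Lean document; each statement's English description precedes it below -/
import Mathlib

section
/- For B ⊆ ℕ, the following are equivalent: (i) for every k ∈ ℕ there exist b_1,...,b_k ∈ B with gcd(b_i, b_j) ∣ (j − i) for all 1 ≤ i < j ≤ k; (ii) for every k ∈ ℕ, the set of multiples M_B = ⋃_{b∈B} bℤ contains k consecutive integers. -/
/-!
If `b_j ∣ n + j` for `j < k`, then `gcd(b_i, b_j)` divides `(n + j) - (n + i) = j - i`.
Conversely, the condition of (i) says exactly that the congruences `n ≡ -i (mod b_i)` are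
pairwise compatible, and a pairwise compatible system of congruences over `ℤ` is solvable
(Chinese remainder theorem for non-coprime moduli). The latter follows by induction, merging
one congruence at a time into a congruence modulo the lcm, since `gcd` distributes over `lcm`.
-/
theorem Nat.gcd_lcm_eq_lcm_gcd (a b c : ℕ) : gcd (lcm a b) c = lcm (gcd a c) (gcd b c) := by
  rcases eq_or_ne a 0 with rfl | ha
  · simp [lcm_eq_left (gcd_dvd_right b c)]
  rcases eq_or_ne b 0 with rfl | hb
  · simp [lcm_eq_right (gcd_dvd_right a c)]
  rcases eq_or_ne c 0 with rfl | hc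
  · simp
  apply Nat.eq_of_factorization_eq (gcd_ne_zero_right hc)
    (lcm_ne_zero (gcd_ne_zero_right hc) (gcd_ne_zero_right hc))
  intro p
  simp only [factorization_gcd (lcm_ne_zero ha hb) hc, factorization_lcm ha hb,
    factorization_lcm (gcd_ne_zero_right hc) (gcd_ne_zero_right hc), factorization_gcd ha hc,
    factorization_gcd hb hc, Finsupp.inf_apply, Finsupp.sup_apply]
  exact min_max_distrib_right ..

theorem Finset.gcd_lcm_eq_lcm_gcd {ι : Type*} (s : Finset ι) (f : ι → ℕ) (c : ℕ) :
    Nat.gcd (s.lcm f) c = s.lcm fun i => Nat.gcd (f i) c := by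
  classical
  induction s using Finset.induction_on with
  | empty => simp
  | insert i s _ ih => simp only [lcm_insert, ← ih]; exact Nat.gcd_lcm_eq_lcm_gcd ..

theorem Int.natCast_finsetLcm_dvd {ι : Type*} {s : Finset ι} {f : ι → ℕ} {d : ℤ}
    (h : ∀ i ∈ s, (f i : ℤ) ∣ d) : ((s.lcm f : ℕ) : ℤ) ∣ d :=
  natCast_dvd.2 <| Finset.lcm_dvd fun i hi => natCast_dvd.1 (h i hi)

theorem Int.exists_dvd_sub_of_gcd_dvd_sub {m₁ m₂ : ℕ} {a₁ a₂ : ℤ}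
    (h : (Nat.gcd m₁ m₂ : ℤ) ∣ a₁ - a₂) : ∃ x : ℤ, (m₁ : ℤ) ∣ x - a₁ ∧ (m₂ : ℤ) ∣ x - a₂ := by
  obtain ⟨t, ht⟩ := h
  have bezout : (Nat.gcd m₁ m₂ : ℤ) = m₁ * Nat.gcdA m₁ m₂ + m₂ * Nat.gcdB m₁ m₂ :=
    Nat.gcd_eq_gcd_ab ..
  refine ⟨a₁ - m₁ * Nat.gcdA m₁ m₂ * t, ⟨-(Nat.gcdA m₁ m₂ * t), by ring⟩,
    ⟨Nat.gcdB m₁ m₂ * t, ?_⟩⟩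
  rw [bezout] at ht
  linarith

theorem Int.exists_forall_dvd_sub_of_pairwise_gcd_dvd {ι : Type*} (s : Finset ι) (m : ι → ℕ)
    (a : ι → ℤ) (h : (s : Set ι).Pairwise fun i j => (Nat.gcd (m i) (m j) : ℤ) ∣ a i - a j) :
    ∃ x : ℤ, ∀ i ∈ s, (m i : ℤ) ∣ x - a i := by
  classical
  induction s using Finset.induction_on with
  | empty => simp
  | insert j s hj ih =>
    rw [Finset.coe_insert, Set.pairwise_insert] at h
    obtain ⟨x, hx⟩ := ih h.1
    have compatible : (Nat.gcd (s.lcm m) (m j) : ℤ) ∣ x - a j := by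
      rw [Finset.gcd_lcm_eq_lcm_gcd]
      refine natCast_finsetLcm_dvd fun i hi => ?_
      have hij : i ≠ j := fun hij => hj (hij ▸ hi)
      rw [← sub_add_sub_cancel x (a i)]
      exact dvd_add ((natCast_dvd_natCast.2 (Nat.gcd_dvd_left _ _)).trans (hx i hi))
        (h.2 i hi hij.symm).2
    obtain ⟨y, hyx, hyj⟩ := exists_dvd_sub_of_gcd_dvd_sub compatible
    refine ⟨y, Finset.forall_mem_insert .. |>.2 ⟨hyj, fun i hi => ?_⟩⟩
    rw [← sub_add_sub_cancel y x]
    exact dvd_add ((natCast_dvd_natCast.2 (Finset.dvd_lcm hi)).trans hyx) (hx i hi)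

theorem stmt_1_general (B : Set ℕ) :
    (∀ k : ℕ, ∃ b : Fin k → ℕ, (∀ i, b i ∈ B) ∧
        ∀ i j : Fin k, i < j → Nat.gcd (b i) (b j) ∣ (j.val - i.val)) ↔
    (∀ k : ℕ, ∃ n : ℤ, ∀ j : ℕ, j < k → ∃ b ∈ B, (b : ℤ) ∣ (n + j)) := by
  constructor
  · intro h k
    obtain ⟨b, hbB, hgcd⟩ := h k
    have compatible : Pairwise fun i j => (Nat.gcd (b i) (b j) : ℤ) ∣ -(i : ℤ) - -(j : ℤ) := by
      intro i j hij
      refine Int.natCast_dvd.2 ?_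
      rcases hij.lt_or_gt with hlt | hgt
      · rw [show (-(i : ℤ) - -(j : ℤ)).natAbs = j - i by omega]
        exact hgcd i j hlt
      · rw [show (-(i : ℤ) - -(j : ℤ)).natAbs = i - j by omega, Nat.gcd_comm]
        exact hgcd j i hgt
    obtain ⟨n, hn⟩ :=
      Int.exists_forall_dvd_sub_of_pairwise_gcd_dvd .univ b _ (compatible.set_pairwise _)
    exact ⟨n, fun j hj => ⟨b ⟨j, hj⟩, hbB _, by simpa using hn ⟨j, hj⟩ (Finset.mem_univ _)⟩⟩
  · intro h k
    obtain ⟨n, hn⟩ := h k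
    choose f hfB hfn using hn
    refine ⟨fun i => f i i.isLt, fun i => hfB _ _, fun i j hij => ?_⟩
    have hi := (Int.natCast_dvd_natCast.2 (Nat.gcd_dvd_left _ (f j j.isLt))).trans (hfn i i.isLt)
    have hj := (Int.natCast_dvd_natCast.2 (Nat.gcd_dvd_right (f i i.isLt) _)).trans (hfn j j.isLt)
    have := Int.natCast_dvd.1 (dvd_sub hj hi)
    rwa [show (n + j - (n + i)).natAbs = j - i by omega] at this

/-- For `B ⊆ ℕ`, the following are equivalent:
(i) for every `k` there exist `b_1, ..., b_k ∈ B` with `gcd(b_i, b_j) ∣ (j - i)`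
for all `i < j`;
(ii) for every `k`, the set of multiples `M_B = ⋃_{b∈B} bℤ` contains `k` consecutive
integers. -/
theorem stmt_1 (B : Set ℕ) (hB : ∀ b ∈ B, 0 < b) :
    (∀ k : ℕ, ∃ b : Fin k → ℕ, (∀ i, b i ∈ B) ∧
        ∀ i j : Fin k, i < j → Nat.gcd (b i) (b j) ∣ (j.val - i.val)) ↔
    (∀ k : ℕ, ∃ n : ℤ, ∀ j : ℕ, j < k → ∃ b ∈ B, (b : ℤ) ∣ (n + j)) :=
  stmt_1_general B
end

section
/- If η = 𝟙_{F_B} : ℤ → {0,1} is the indicator of the B-free integers and η is periodic with period m (η(n+m) = η(n) for all n), and B is primitive, then B is finite and every b ∈ B divides m; in particular lcm(B) divides m. -/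
/-! The multiples of `B` form a set `M` closed under multiplication by integers. If `M` is
`m`-periodic, then together with `b ∈ B` it contains `b * u + m * v = gcd(b, m)`, so some
`b' ∈ B` divides `gcd(b, m)`, hence divides `b`; primitivity forces `b' = b`, so `b ∣ m`.
Then `B` lies among the finitely many divisors of `m`. -/

theorem Int.gcd_mem_of_periodic {S : ℤ → Prop} {m : ℤ} (hper : Function.Periodic S m)
    (hmul : ∀ a n, S a → S (a * n)) {a : ℤ} (ha : S a) : S (Int.gcd a m) := by
  have h : S (a * Int.gcdA a m + Int.gcdB a m * m) :=
    (hper.int_mul _ _).symm ▸ hmul a _ ha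
  rwa [Int.gcd_eq_gcd_ab, mul_comm m]

theorem dvd_of_periodic_multiples {B : Set ℕ}
    (hprim : ∀ b ∈ B, ∀ b' ∈ B, b ≠ b' → ¬ b ∣ b') {m : ℕ}
    (hper : Function.Periodic (fun n : ℤ => ∃ b ∈ B, (b : ℤ) ∣ n) m) {b : ℕ} (hb : b ∈ B) :
    b ∣ m := by
  obtain ⟨b', hb', hdvd⟩ := Int.gcd_mem_of_periodic hper
    (fun _ n ⟨c, hc, hca⟩ => ⟨c, hc, hca.mul_right n⟩) ⟨b, hb, dvd_rfl⟩
  rw [Int.gcd_natCast_natCast, Int.natCast_dvd_natCast] at hdvd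
  obtain rfl : b' = b := by_contra fun hne => hprim b' hb' b hb hne (hdvd.trans (b.gcd_dvd_left m))
  exact hdvd.trans (b'.gcd_dvd_right m)

theorem stmt_6_general (B : Set ℕ)
    (hprim : ∀ b ∈ B, ∀ b' ∈ B, b ≠ b' → ¬ b ∣ b')
    (m : ℕ) (hm : 0 < m)
    (hper : ∀ n : ℤ, ((∀ b ∈ B, ¬ (b : ℤ) ∣ (n + (m : ℤ))) ↔ (∀ b ∈ B, ¬ (b : ℤ) ∣ n))) :
    B.Finite ∧ (∀ b ∈ B, b ∣ m) ∧ ∀ (hf : B.Finite), hf.toFinset.lcm id ∣ m := by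
  have hmult : Function.Periodic (fun n : ℤ => ∃ b ∈ B, (b : ℤ) ∣ n) m :=
    fun n => propext (by simpa using (hper n).not)
  have hdvd : ∀ b ∈ B, b ∣ m := fun b hb => dvd_of_periodic_multiples hprim hmult hb
  have hfin : B.Finite := (m.divisors.finite_toSet).subset fun b hb =>
    Nat.mem_divisors.mpr ⟨hdvd b hb, hm.ne'⟩
  exact ⟨hfin, hdvd, fun hf => Finset.lcm_dvd fun b hb => hdvd b (hf.mem_toFinset.mp hb)⟩

/-- If `B ⊆ ℕ` is primitive and the indicator `η` of the `B`-free
integers `F_B = ℤ \ ⋃_{b∈B} bℤ` is periodic with period `m ≥ 1` (i.e. `n + m ∈ F_B ↔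
n ∈ F_B` for all `n ∈ ℤ`), then `B` is finite, every `b ∈ B` divides `m`, and in
particular `lcm(B)` divides `m`. -/
theorem stmt_6 (B : Set ℕ) (hpos : ∀ b ∈ B, 0 < b)
    (hprim : ∀ b ∈ B, ∀ b' ∈ B, b ≠ b' → ¬ b ∣ b')
    (m : ℕ) (hm : 0 < m)
    (hper : ∀ n : ℤ, ((∀ b ∈ B, ¬ (b : ℤ) ∣ (n + (m : ℤ))) ↔ (∀ b ∈ B, ¬ (b : ℤ) ∣ n))) :
    B.Finite ∧ (∀ b ∈ B, b ∣ m) ∧ ∀ (hf : B.Finite), hf.toFinset.lcm id ∣ m :=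
  stmt_6_general B hprim m hm hper
end

section
/- Let B = {b_i · 2^i : i ≥ 1} where b_i ≥ 2 for all i. Then the indicator η of the B-free integers is a Toeplitz sequence: for every n ∈ ℤ there exists d ∈ ℕ, d ≥ 1, such that η(n + k·d) = η(n) for all k ∈ ℤ. Specifically, if n ∉ ⋃_i b_i 2^i ℤ and n = m·2^a with m odd, then n + j·b_1·…·b_a·2^{a+1} ∉ ⋃_i b_i 2^i ℤ for all j ∈ ℤ. -/
/-!
If `n = m·2^a` with `m` odd is `B`-free, adding a multiple of `d = b_1⋯b_a·2^(a+1)` keeps it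
`B`-free: the moduli `b_i 2^i` with `i ≤ a` divide `d`, so they divide `n + kd` only if they
divide `n`; those with `i > a` are multiples of `2^(a+1)`, which divides `d` but not `n`.
A non-`B`-free `n` is divisible by some `b_i 2^i`, which is then itself a period.
-/

theorem Int.exists_eq_two_pow_mul_odd {n : ℤ} (hn : n ≠ 0) :
    ∃ a : ℕ, ∃ m : ℤ, Odd m ∧ n = 2 ^ a * m := by
  obtain ⟨a, m, hm, hnm⟩ := Nat.exists_eq_two_pow_mul_odd (Int.natAbs_ne_zero.mpr hn)
  have hm' : Odd (m : ℤ) := by exact_mod_cast hm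
  rcases Int.natAbs_eq n with h | h
  · exact ⟨a, m, hm', by rw [h, hnm]; push_cast; ring⟩
  · exact ⟨a, -m, hm'.neg, by rw [h, hnm]; push_cast; ring⟩

theorem Int.not_two_pow_succ_dvd_mul_two_pow {m : ℤ} (hm : Odd m) (a : ℕ) :
    ¬ (2 : ℤ) ^ (a + 1) ∣ m * 2 ^ a := by
  rw [pow_succ, mul_comm m, mul_dvd_mul_iff_left (pow_ne_zero a two_ne_zero)]
  exact fun h => Int.not_even_iff_odd.mpr hm (even_iff_two_dvd.mpr h)

/-- `n` is `B`-free for `B = {b_i 2^i : i ≥ 1}`. -/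
def BFree (b : ℕ → ℕ) (n : ℤ) : Prop :=
  ∀ i : ℕ, 1 ≤ i → ¬ (((b i * 2 ^ i : ℕ) : ℤ) ∣ n)

namespace BFree

variable {b : ℕ → ℕ} {n : ℤ}

theorem ne_zero (h : BFree b n) : n ≠ 0 := by
  rintro rfl
  exact h 1 le_rfl (dvd_zero _)

theorem add_of_dvd {m d : ℤ} {a : ℕ} (h : BFree b n) (hm : Odd m) (hn : n = m * 2 ^ a)
    (hlow : ∀ i ∈ Finset.Icc 1 a, ((b i * 2 ^ i : ℕ) : ℤ) ∣ d)
    (hhigh : (2 : ℤ) ^ (a + 1) ∣ d) :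
    BFree b (n + d) := by
  intro i hi hdvd
  by_cases hia : i ≤ a
  · exact h i hi ((dvd_add_left (hlow i (Finset.mem_Icc.mpr ⟨hi, hia⟩))).mp hdvd)
  · have h2i : (2 : ℤ) ^ (a + 1) ∣ ((b i * 2 ^ i : ℕ) : ℤ) := by
      push_cast
      exact (pow_dvd_pow 2 (by omega)).mul_left _
    exact Int.not_two_pow_succ_dvd_mul_two_pow hm a
      (hn ▸ (dvd_add_left hhigh).mp (h2i.trans hdvd))

theorem add_mul_prod_mul_two_pow {m : ℤ} {a : ℕ} (h : BFree b n) (hm : Odd m)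
    (hn : n = m * 2 ^ a) (j : ℤ) :
    BFree b (n + j * (∏ t ∈ Finset.Icc 1 a, (b t : ℤ)) * 2 ^ (a + 1)) := by
  rw [mul_assoc]
  refine h.add_of_dvd hm hn (fun i hi => ?_) ((dvd_mul_left _ _).mul_left j)
  push_cast
  exact (mul_dvd_mul (Finset.dvd_prod_of_mem _ hi)
    (pow_dvd_pow 2 (by grind))).mul_left j

theorem not_add_mul_of_dvd {i : ℕ} (hi : 1 ≤ i) (hdvd : ((b i * 2 ^ i : ℕ) : ℤ) ∣ n)
    (k : ℤ) :
    ¬ BFree b (n + k * (b i * 2 ^ i : ℕ)) :=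
  fun h => h i hi (hdvd.add (dvd_mul_left _ k))

end BFree

/-- Let `B = {b_i · 2^i : i ≥ 1}` with `b_i ≥ 2` for all `i ≥ 1`. Then
the indicator `η` of the `B`-free integers is a Toeplitz sequence: for every `n ∈ ℤ`
there exists `d ≥ 1` with `η(n + k·d) = η(n)` for all `k ∈ ℤ`.  Specifically, if
`n ∉ ⋃_i b_i 2^i ℤ` and `n = m·2^a` with `m` odd, then
`n + j·b_1⋯b_a·2^(a+1) ∉ ⋃_i b_i 2^i ℤ` for all `j ∈ ℤ`. -/
theorem stmt_8 (b : ℕ → ℕ) (hb : ∀ i : ℕ, 1 ≤ i → 2 ≤ b i) :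
    (∀ n : ℤ, ∃ d : ℕ, 0 < d ∧ ∀ k : ℤ,
        ((∀ i : ℕ, 1 ≤ i → ¬ (((b i * 2 ^ i : ℕ) : ℤ) ∣ (n + k * (d : ℤ)))) ↔
         (∀ i : ℕ, 1 ≤ i → ¬ (((b i * 2 ^ i : ℕ) : ℤ) ∣ n)))) ∧
    (∀ n : ℤ, (∀ i : ℕ, 1 ≤ i → ¬ (((b i * 2 ^ i : ℕ) : ℤ) ∣ n)) →
      ∀ m : ℤ, Odd m → ∀ a : ℕ, n = m * 2 ^ a →
      ∀ j : ℤ, ∀ i : ℕ, 1 ≤ i →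
        ¬ (((b i * 2 ^ i : ℕ) : ℤ) ∣
            (n + j * (∏ t ∈ Finset.Icc 1 a, (b t : ℤ)) * 2 ^ (a + 1)))) := by
  refine ⟨fun n => ?_, fun n hfree m hm a hn j => BFree.add_mul_prod_mul_two_pow hfree hm hn j⟩
  by_cases hfree : BFree b n
  · obtain ⟨a, m, hm, hnm⟩ := Int.exists_eq_two_pow_mul_odd hfree.ne_zero
    have hn : n = m * 2 ^ a := by rw [hnm, mul_comm]
    refine ⟨(∏ t ∈ Finset.Icc 1 a, b t) * 2 ^ (a + 1), ?_, fun k => iff_of_true ?_ hfree⟩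
    · have : 0 < ∏ t ∈ Finset.Icc 1 a, b t :=
        Finset.prod_pos fun t ht => (hb t (Finset.mem_Icc.mp ht).1).trans_lt' two_pos
      positivity
    · show BFree b _
      convert hfree.add_mul_prod_mul_two_pow hm hn k using 2
      push_cast
      ring
  · obtain ⟨i, hi, hdvd⟩ : ∃ i, 1 ≤ i ∧ ((b i * 2 ^ i : ℕ) : ℤ) ∣ n := by
      simpa [BFree] using hfree
    exact ⟨b i * 2 ^ i, by have := hb i hi; positivity,
      fun k => iff_of_false (BFree.not_add_mul_of_dvd hi hdvd k) hfree⟩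
end

section
/- Let d ≥ 1, A ⊆ {0,...,d−1}, and B ⊆ ℕ. Suppose for every k ≥ 1 there exist n_k ∈ ℤ and 0 ≤ r_k ≤ d−1 such that A + m·d + r_k ⊆ F_B for all n_k ≤ m ≤ n_k + k. Then for any r ∈ {0,...,d−1} such that r_k = r for infinitely many k, we have A + ℤ·d + r ⊆ F_B. -/
/-! Divisibility of `a + m * d + r` by `b` depends only on `m mod b`, and every integer interval
of length at least `b` meets every residue class mod `b`. Choosing `k ≥ b` with `r_k = r`, the
window `[n_k, n_k + k]` therefore contains some `m'` with `m' ≡ m [ZMOD b]`, so `b ∣ a + m d + r`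
would force `b ∣ a + m' d + r_k`, which the hypothesis excludes. -/

theorem Int.exists_modEq_mem_Ico (n m : ℤ) {b : ℤ} (hb : 0 < b) :
    ∃ m' ∈ Set.Ico n (n + b), m' ≡ m [ZMOD b] := by
  refine ⟨n + (m - n) % b, ⟨?_, ?_⟩, ?_⟩
  · linarith [Int.emod_nonneg (m - n) hb.ne']
  · linarith [Int.emod_lt_of_pos (m - n) hb]
  · simpa using (Int.mod_modEq (m - n) b).add_left n

theorem Int.dvd_add_mul_add_iff_of_modEq {b m m' : ℤ} (a d r : ℤ) (h : m' ≡ m [ZMOD b]) :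
    b ∣ a + m' * d + r ↔ b ∣ a + m * d + r := by
  have hcongr : a + m' * d + r ≡ a + m * d + r [ZMOD b] :=
    ((h.mul_right d).add_left a).add_right r
  simp only [← Int.modEq_zero_iff_dvd]
  exact ⟨hcongr.symm.trans, hcongr.trans⟩

theorem stmt_9_general (d : ℕ) (A : Set ℕ)
    (B : Set ℕ) (hB : ∀ b ∈ B, 0 < b) (n : ℕ → ℤ) (rk : ℕ → ℕ)
    (h : ∀ k : ℕ, 1 ≤ k → rk k ≤ d - 1 ∧
        ∀ m : ℤ, n k ≤ m → m ≤ n k + (k : ℤ) →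
          ∀ a ∈ A, ∀ b ∈ B, ¬ (b : ℤ) ∣ ((a : ℤ) + m * (d : ℤ) + (rk k : ℤ))) :
    ∀ r : ℕ, r ≤ d - 1 → {k : ℕ | 1 ≤ k ∧ rk k = r}.Infinite →
      ∀ a ∈ A, ∀ m : ℤ, ∀ b ∈ B, ¬ (b : ℤ) ∣ ((a : ℤ) + m * (d : ℤ) + (r : ℤ)) := by
  intro r _ hinf a ha m b hb hdvd
  obtain ⟨k, ⟨hk1, hkr⟩, hbk⟩ := hinf.exists_gt b
  obtain ⟨m', ⟨hnm', hm'b⟩, hm'm⟩ :=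
    Int.exists_modEq_mem_Ico (n k) m (b := b) (by exact_mod_cast hB b hb)
  refine (h k hk1).2 m' hnm' (by omega) a ha b hb ?_
  rw [hkr]
  exact (Int.dvd_add_mul_add_iff_of_modEq _ _ _ hm'm).mpr hdvd

/-- Let `d ≥ 1`, `A ⊆ {0,...,d-1}` and `B ⊆ ℕ`. Suppose for every
`k ≥ 1` there are `n_k ∈ ℤ` and `0 ≤ r_k ≤ d-1` such that `A + m·d + r_k ⊆ F_B` for
all `n_k ≤ m ≤ n_k + k`.  Then for any `r ∈ {0,...,d-1}` with `r_k = r` for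
infinitely many `k`, we have `A + ℤ·d + r ⊆ F_B`. -/
theorem stmt_9 (d : ℕ) (hd : 0 < d) (A : Set ℕ) (hA : ∀ a ∈ A, a < d)
    (B : Set ℕ) (hB : ∀ b ∈ B, 0 < b) (n : ℕ → ℤ) (rk : ℕ → ℕ)
    (h : ∀ k : ℕ, 1 ≤ k → rk k ≤ d - 1 ∧
        ∀ m : ℤ, n k ≤ m → m ≤ n k + (k : ℤ) →
          ∀ a ∈ A, ∀ b ∈ B, ¬ (b : ℤ) ∣ ((a : ℤ) + m * (d : ℤ) + (rk k : ℤ))) :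
    ∀ r : ℕ, r ≤ d - 1 → {k : ℕ | 1 ≤ k ∧ rk k = r}.Infinite →
      ∀ a ∈ A, ∀ m : ℤ, ∀ b ∈ B, ¬ (b : ℤ) ∣ ((a : ℤ) + m * (d : ℤ) + (r : ℤ)) :=
  stmt_9_general d A B hB n rk h
end

section
/- For any b_1,...,b_K ∈ ℕ and any residues r_1,...,r_K with r_k ∈ ℤ/b_kℤ, the natural density of ⋃_{k≤K}(b_kℤ + r_k) is at least the density of ⋃_{k≤K} b_kℤ. (Rogers' inequality: shifted unions of progressions have density at least that of the unshifted union.) -/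
/-!
Both sets are `L`-periodic, so it suffices to compare the numbers of covered residues below `L`.
We induct on `L`. Split off a prime power, `L = p ^ e * M`, and write `b k = p ^ a k * m k`
with `p ∤ m k`. By the Chinese remainder theorem a residue is a pair `(u, v)` modulo `p ^ e` and
`M`, and it is covered iff `p ^ a k ∣ u - r k` and `m k ∣ v - r k` for some `k`. For fixed `u`
the shifted count is the count modulo `M` for the subfamily `T' u = {k | p ^ a k ∣ u - r k}`,
which by induction dominates its unshifted version.

Order the indices by `a k` and assign each multiple `v` of some `m k` to the first such `k`.
For the unshifted subfamilies `T u = {k | p ^ a k ∣ u}`, which are initial segments of this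
order, this partitions the union `⋃_{k ∈ T u} m k ℤ`, while for `T' u` it only packs disjoint
pieces into the union. Since each `k` lies in exactly `p ^ (e - a k)` of the `T u` and equally
many of the `T' u`, summing over `u` gives the inequality.
-/

open Finset

variable {ι α β : Type*}

lemma sum_sum_filter_eq_sum_card_filter_mul {γ : Type*} (s : Finset γ) (S : Finset ι)
    (c : γ → ι → Prop) [∀ u k, Decidable (c u k)] (f : ι → ℕ) :
    ∑ u ∈ s, ∑ k ∈ S with c u k, f k = ∑ k ∈ S, #{u ∈ s | c u k} * f k := by
  rw [sum_comm' (t' := S) (s' := fun k => {u ∈ s | c u k}) (by simp only [mem_filter]; tauto)]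
  simp only [sum_const, smul_eq_mul]

lemma card_filter_range_dvd_sub {q N : ℕ} (hqN : q ∣ N) (r : ℤ) :
    #{u ∈ range N | (q : ℤ) ∣ (u : ℕ) - r} = N / q := by
  rcases Nat.eq_zero_or_pos q with rfl | hq
  · simp [zero_dvd_iff.1 hqN]
  have hv : (((r % q).toNat : ℕ) : ℤ) = r % q :=
    Int.toNat_of_nonneg (Int.emod_nonneg _ (by omega))
  have hcount := Nat.count_modEq_card N hq (r % q).toNat
  rw [Nat.mod_eq_zero_of_dvd hqN, if_neg (Nat.not_lt_zero _), add_zero,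
    Nat.count_eq_card_filter_range] at hcount
  rw [← hcount]
  refine congrArg card (filter_congr fun u _ => ?_)
  rw [← Int.natCast_modEq_iff, hv, ← Int.modEq_iff_dvd]
  exact ⟨fun h => h.symm.trans (Int.mod_modEq r q).symm,
    fun h => (h.trans (Int.mod_modEq r q)).symm⟩

lemma card_filter_range_mul_eq_sum {A B : ℕ} (hA : 0 < A) (hB : 0 < B) (hAB : A.Coprime B)
    (Q : ℕ → ℕ → Prop) [∀ u v, Decidable (Q u v)] :
    #{n ∈ range (A * B) | Q (n % A) (n % B)} = ∑ u ∈ range A, #{v ∈ range B | Q u v} := by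
  have hprod : ∑ u ∈ range A, #{v ∈ range B | Q u v} =
      #{z ∈ range A ×ˢ range B | Q z.1 z.2} := by
    simp only [card_filter, sum_product]
  rw [hprod]
  refine card_nbij (fun n => (n % A, n % B)) (fun n hn => ?_) (fun n₁ hn₁ n₂ hn₂ h => ?_)
    (fun z hz => ?_)
  · simp only [mem_coe, mem_filter, mem_range, mem_product] at hn ⊢
    exact ⟨⟨Nat.mod_lt _ hA, Nat.mod_lt _ hB⟩, hn.2⟩
  · simp only [mem_coe, mem_filter, mem_range, Prod.mk.injEq] at hn₁ hn₂ h
    have h' := (Nat.modEq_and_modEq_iff_modEq_mul hAB).1 h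
    rwa [Nat.ModEq, Nat.mod_eq_of_lt hn₁.1, Nat.mod_eq_of_lt hn₂.1] at h'
  · simp only [mem_coe, mem_filter, mem_range, mem_product] at hz
    obtain ⟨⟨hu, hv⟩, hQ⟩ := hz
    obtain ⟨n, hnu, hnv⟩ := Nat.chineseRemainder hAB z.1 z.2
    have hnA : n % (A * B) % A = z.1 := by
      rw [Nat.mod_mod_of_dvd n (dvd_mul_right A B)]
      exact Eq.trans hnu (Nat.mod_eq_of_lt hu)
    have hnB : n % (A * B) % B = z.2 := by
      rw [Nat.mod_mod_of_dvd n (dvd_mul_left B A)]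
      exact Eq.trans hnv (Nat.mod_eq_of_lt hv)
    refine ⟨n % (A * B), ?_, Prod.ext hnA hnB⟩
    simp only [mem_coe, mem_filter, mem_range, hnA, hnB]
    exact ⟨Nat.mod_lt _ (Nat.mul_pos hA hB), hQ⟩

lemma natCast_dvd_natCast_mod_sub_iff {d N : ℕ} (h : d ∣ N) (n : ℕ) (x : ℤ) :
    (d : ℤ) ∣ ((n % N : ℕ) : ℤ) - x ↔ (d : ℤ) ∣ n - x := by
  have hmod : ((n % N : ℕ) : ℤ) ≡ n [ZMOD d] := by
    rw [Int.natCast_mod]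
    exact Int.emod_emod_of_dvd _ (Int.natCast_dvd_natCast.2 h)
  exact (hmod.sub_right x).dvd_iff

lemma natCast_mul_dvd_iff_of_coprime {s t : ℕ} (hst : s.Coprime t) (x : ℤ) :
    ((s * t : ℕ) : ℤ) ∣ x ↔ (s : ℤ) ∣ x ∧ (t : ℤ) ∣ x := by
  rw [Nat.cast_mul]
  exact ⟨fun h => ⟨dvd_of_mul_right_dvd h, dvd_of_mul_left_dvd h⟩,
    fun h => (Nat.isCoprime_iff_coprime.2 hst).mul_dvd h.1 h.2⟩

section Disjointed

variable [DecidableEq α] [LinearOrder β] (A : ι → Finset α) (w : ι → β) (S : Finset ι)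

def disjointedBy (k : ι) : Finset α :=
  {x ∈ A k | ∀ j ∈ S, w j < w k → x ∉ A j}

variable {A w S}

lemma sum_card_disjointedBy_le_card_biUnion {T : Finset ι} (hw : Set.InjOn w S) (hTS : T ⊆ S) :
    ∑ k ∈ T, #(disjointedBy A w S k) ≤ #(T.biUnion A) := by
  have hdisj : (T : Set ι).PairwiseDisjoint (disjointedBy A w S) := by
    intro j hj k hk hjk
    rcases lt_or_gt_of_ne ((hw.ne_iff (hTS hj) (hTS hk)).2 hjk) with h | h
    · exact disjoint_left.2 fun x hxj hxk =>
        (mem_filter.1 hxk).2 j (hTS hj) h (mem_filter.1 hxj).1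
    · exact disjoint_right.2 fun x hxk hxj =>
        (mem_filter.1 hxj).2 k (hTS hk) h (mem_filter.1 hxk).1
  rw [← card_biUnion hdisj]
  exact card_le_card (biUnion_mono fun k _ => filter_subset _ _)

lemma card_biUnion_le_sum_card_disjointedBy {T : Finset ι}
    (hT : ∀ j ∈ S, ∀ k ∈ T, w j < w k → j ∈ T) :
    #(T.biUnion A) ≤ ∑ k ∈ T, #(disjointedBy A w S k) := by
  refine (card_le_card fun x hx => ?_).trans card_biUnion_le
  obtain ⟨k₀, hk₀, hxk₀⟩ := mem_biUnion.1 hx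
  obtain ⟨k, hk, hmin⟩ :=
    exists_min_image {k ∈ T | x ∈ A k} w ⟨k₀, mem_filter.2 ⟨hk₀, hxk₀⟩⟩
  rw [mem_filter] at hk
  refine mem_biUnion.2 ⟨k, hk.1, mem_filter.2 ⟨hk.2, fun j hj hjk hxj => ?_⟩⟩
  exact (hmin j (mem_filter.2 ⟨hT j hj k hk.1 hjk, hxj⟩)).not_gt hjk

end Disjointed

lemma sum_card_biUnion_filter_dvd_le_dvd_sub [DecidableEq α] [LinearOrder β]
    (A : ι → Finset α) {w : ι → β} {S : Finset ι} (hw : Set.InjOn w S) {N : ℕ} {q : ι → ℕ}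
    (hqN : ∀ k, q k ∣ N) (hq : ∀ j ∈ S, ∀ k ∈ S, w j < w k → q j ∣ q k) (r : ι → ℤ) :
    ∑ u ∈ range N, #({k ∈ S | (q k : ℤ) ∣ u}.biUnion A) ≤
      ∑ u ∈ range N, #({k ∈ S | (q k : ℤ) ∣ u - r k}.biUnion A) := by
  have hdown (u : ℕ) : ∀ j ∈ S, ∀ k ∈ {k ∈ S | (q k : ℤ) ∣ u}, w j < w k →
      j ∈ {k ∈ S | (q k : ℤ) ∣ u} := by
    intro j hj k hk hjk
    rw [mem_filter] at hk ⊢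
    exact ⟨hj, (Int.natCast_dvd_natCast.2 (hq j hj k hk.1 hjk)).trans hk.2⟩
  have hcount (k : ι) : #{u ∈ range N | (q k : ℤ) ∣ (u : ℕ)} =
      #{u ∈ range N | (q k : ℤ) ∣ (u : ℕ) - r k} := by
    simpa using (card_filter_range_dvd_sub (hqN k) 0).trans
      (card_filter_range_dvd_sub (hqN k) (r k)).symm
  calc ∑ u ∈ range N, #({k ∈ S | (q k : ℤ) ∣ u}.biUnion A)
      ≤ ∑ u ∈ range N, ∑ k ∈ S with (q k : ℤ) ∣ u, #(disjointedBy A w S k) :=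
        sum_le_sum fun u _ => card_biUnion_le_sum_card_disjointedBy (hdown u)
    _ = ∑ k ∈ S, #{u ∈ range N | (q k : ℤ) ∣ (u : ℕ) - r k} * #(disjointedBy A w S k) := by
        simp_rw [sum_sum_filter_eq_sum_card_filter_mul, hcount]
    _ = ∑ u ∈ range N, ∑ k ∈ S with (q k : ℤ) ∣ u - r k, #(disjointedBy A w S k) :=
        (sum_sum_filter_eq_sum_card_filter_mul _ _ _ _).symm
    _ ≤ ∑ u ∈ range N, #({k ∈ S | (q k : ℤ) ∣ u - r k}.biUnion A) :=
        sum_le_sum fun u _ => sum_card_disjointedBy_le_card_biUnion hw (filter_subset _ _)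

def coverCount (N : ℕ) (b : ι → ℕ) (r : ι → ℤ) (S : Finset ι) : ℕ :=
  #{n ∈ range N | ∃ k ∈ S, (b k : ℤ) ∣ (n : ℕ) - r k}

lemma coverCount_eq_card_biUnion (N : ℕ) (b : ι → ℕ) (r : ι → ℤ) (S : Finset ι) :
    coverCount N b r S = #(S.biUnion fun k => {n ∈ range N | (b k : ℤ) ∣ (n : ℕ) - r k}) := by
  rw [coverCount]
  congr 1
  ext n
  simp only [mem_filter, mem_biUnion]
  tauto

lemma coverCount_mul {A B : ℕ} (hA : 0 < A) (hB : 0 < B) (hAB : A.Coprime B) {q m : ι → ℕ}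
    (hqm : ∀ k, (q k).Coprime (m k)) (hqA : ∀ k, q k ∣ A) (hmB : ∀ k, m k ∣ B)
    (r : ι → ℤ) (S : Finset ι) :
    coverCount (A * B) (fun k => q k * m k) r S =
      ∑ u ∈ range A, coverCount B m r {k ∈ S | (q k : ℤ) ∣ (u : ℕ) - r k} := by
  have hsplit (n : ℕ) : (∃ k ∈ S, ((q k * m k : ℕ) : ℤ) ∣ n - r k) ↔
      ∃ k ∈ S, (q k : ℤ) ∣ ((n % A : ℕ) : ℤ) - r k ∧ (m k : ℤ) ∣ ((n % B : ℕ) : ℤ) - r k := by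
    simp only [natCast_mul_dvd_iff_of_coprime (hqm _), natCast_dvd_natCast_mod_sub_iff (hqA _),
      natCast_dvd_natCast_mod_sub_iff (hmB _)]
  rw [coverCount, filter_congr fun n _ => hsplit n, card_filter_range_mul_eq_sum hA hB hAB
    (fun u v => ∃ k ∈ S, (q k : ℤ) ∣ (u : ℤ) - r k ∧ (m k : ℤ) ∣ (v : ℤ) - r k)]
  simp only [coverCount, mem_filter, and_assoc]

lemma coverCount_pow_mul_zero_le [LinearOrder ι] {p e M : ℕ} (hp : 0 < p) (hM : 0 < M)
    (hpM : p.Coprime M) {a m : ι → ℕ} (hae : ∀ k, a k ≤ e) (hpm : ∀ k, p.Coprime (m k))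
    (hmM : ∀ k, m k ∣ M) (r : ι → ℤ) (S : Finset ι)
    (ih : ∀ T, coverCount M m 0 T ≤ coverCount M m r T) :
    coverCount (p ^ e * M) (fun k => p ^ a k * m k) 0 S ≤
      coverCount (p ^ e * M) (fun k => p ^ a k * m k) r S := by
  have hsplit (r : ι → ℤ) := coverCount_mul (pow_pos hp e) hM (hpM.pow_left e)
    (fun k => (hpm k).pow_left (a k)) (fun k => pow_dvd_pow p (hae k)) hmM r S
  have hw : Set.InjOn (fun k => toLex (a k, k)) S :=
    fun j _ k _ h => (Prod.ext_iff.1 (toLex.injective h)).2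
  have hchain : ∀ j ∈ S, ∀ k ∈ S, toLex (a j, j) < toLex (a k, k) → p ^ a j ∣ p ^ a k :=
    fun j _ k _ h => pow_dvd_pow p (Prod.Lex.monotone_fst _ _ h.le)
  set A : ι → Finset ℕ := fun k => {v ∈ range M | (m k : ℤ) ∣ (v : ℕ)}
  calc coverCount (p ^ e * M) (fun k => p ^ a k * m k) 0 S
      = ∑ u ∈ range (p ^ e), #({k ∈ S | ((p ^ a k : ℕ) : ℤ) ∣ (u : ℕ)}.biUnion A) := by
        simp only [hsplit, coverCount_eq_card_biUnion, Pi.zero_apply, sub_zero, A]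
    _ ≤ ∑ u ∈ range (p ^ e), #({k ∈ S | ((p ^ a k : ℕ) : ℤ) ∣ (u : ℕ) - r k}.biUnion A) :=
        sum_card_biUnion_filter_dvd_le_dvd_sub A hw (fun k => pow_dvd_pow p (hae k)) hchain r
    _ = ∑ u ∈ range (p ^ e), coverCount M m 0 {k ∈ S | ((p ^ a k : ℕ) : ℤ) ∣ (u : ℕ) - r k} := by
        simp only [coverCount_eq_card_biUnion, Pi.zero_apply, sub_zero, A]
    _ ≤ ∑ u ∈ range (p ^ e), coverCount M m r {k ∈ S | ((p ^ a k : ℕ) : ℤ) ∣ (u : ℕ) - r k} :=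
        sum_le_sum fun u _ => ih _
    _ = coverCount (p ^ e * M) (fun k => p ^ a k * m k) r S := (hsplit r).symm

theorem coverCount_zero_le [LinearOrder ι] {L : ℕ} {b : ι → ℕ} (hbL : ∀ k, b k ∣ L)
    (r : ι → ℤ) (S : Finset ι) : coverCount L b 0 S ≤ coverCount L b r S := by
  induction L using Nat.strong_induction_on generalizing b S with
  | _ L ih =>
  rcases le_or_gt L 1 with hL | hL
  · refine card_le_card fun n hn => ?_
    simp only [mem_filter, mem_range] at hn ⊢
    obtain ⟨hnL, k, hk, -⟩ := hn
    obtain rfl : L = 1 := by omega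
    exact ⟨hnL, k, hk, by simp [Nat.dvd_one.1 (hbL k)]⟩
  have hL0 : L ≠ 0 := by omega
  have hb0 (k : ι) : b k ≠ 0 := ne_zero_of_dvd_ne_zero hL0 (hbL k)
  obtain ⟨p, hp, hpL⟩ := Nat.exists_prime_and_dvd (show L ≠ 1 by omega)
  have hML : ordCompl[p] L < L :=
    (Nat.ordCompl_le L p).lt_of_ne fun h => Nat.not_dvd_ordCompl hp hL0 (by rwa [h])
  have hstep := coverCount_pow_mul_zero_le hp.pos (Nat.ordCompl_pos p hL0)
    (Nat.coprime_ordCompl hp hL0) (a := fun k => (b k).factorization p)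
    (fun k => (Nat.factorization_le_iff_dvd (hb0 k) hL0).2 (hbL k) p)
    (fun k => Nat.coprime_ordCompl hp (hb0 k))
    (fun k => Nat.ordCompl_dvd_ordCompl_of_dvd (hbL k) p) r S
    (ih _ hML fun k => Nat.ordCompl_dvd_ordCompl_of_dvd (hbL k) p)
  simpa only [Nat.ordProj_mul_ordCompl_eq_self] using hstep

lemma card_filter_Icc_eq_coverCount {L : ℕ} {b : ι → ℕ} (hbL : ∀ k, b k ∣ L) (r : ι → ℤ)
    (S : Finset ι) :
    #{n ∈ Icc 1 L | ∃ k ∈ S, (b k : ℤ) ∣ (n : ℕ) - r k} = coverCount L b r S := by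
  have hper : Function.Periodic (fun n : ℕ => ∃ k ∈ S, (b k : ℤ) ∣ (n : ℕ) - r k) L := by
    intro n
    simp only [Nat.cast_add, add_sub_right_comm,
      dvd_add_left (Int.natCast_dvd_natCast.2 (hbL _))]
  rw [← Ico_add_one_right_eq_Icc, add_comm L 1, Nat.filter_Ico_card_eq_of_periodic _ _ _ hper,
    Nat.count_eq_card_filter_range, coverCount]

open scoped Classical in
lemma card_filter_natCast (s : Finset ℕ) (P : ℤ → Prop) [DecidablePred P] :
    #({n ∈ (s : Finset ℤ) | P n}) = #{n ∈ s | P (n : ℕ)} := by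
  rw [← card_image_of_injective _ (Nat.cast_injective (R := ℤ))]
  congr 1
  ext n
  simp only [bind, pure_def, sup_singleton_apply, mem_filter, mem_image]
  aesop

open scoped Classical in
theorem stmt_13_general (K : ℕ) (b : Fin K → ℕ) (r : Fin K → ℤ) :
    ((((Finset.Icc 1 (Finset.univ.lcm b)).filter
        (fun n => ∃ k, (b k : ℤ) ∣ ((n : ℤ) - r k))).card : ℚ) /
          ((Finset.univ.lcm b : ℕ) : ℚ)) ≥
    ((((Finset.Icc 1 (Finset.univ.lcm b)).filter
        (fun n => ∃ k, b k ∣ n)).card : ℚ) / ((Finset.univ.lcm b : ℕ) : ℚ)) := by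
  have hbL (k : Fin K) : b k ∣ univ.lcm b := dvd_lcm (mem_univ k)
  have hcount (r : Fin K → ℤ) : #{n ∈ Icc 1 (univ.lcm b) | ∃ k, (b k : ℤ) ∣ (n : ℕ) - r k} =
      coverCount (univ.lcm b) b r univ := by
    simpa using card_filter_Icc_eq_coverCount hbL r univ
  have h0 := hcount 0
  simp only [Pi.zero_apply, sub_zero, Int.natCast_dvd_natCast] at h0
  rw [ge_iff_le, card_filter_natCast, hcount r, h0]
  gcongr
  exact coverCount_zero_le hbL r univ

open scoped Classical in
/-- Rogers' inequality: For any `b_1,...,b_K ∈ ℕ` and residues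
`r_1,...,r_K`, the natural density of `⋃_{k≤K} (b_kℤ + r_k)` is at least the
density of `⋃_{k≤K} b_kℤ`.  Both sets are periodic modulo `L = lcm(b_1,...,b_K)`,
so their densities are the proportions of covered residues in `[1, L]`. -/
theorem stmt_13 (K : ℕ) (b : Fin K → ℕ) (hb : ∀ k, 0 < b k) (r : Fin K → ℤ) :
    ((((Finset.Icc 1 (Finset.univ.lcm b)).filter
        (fun n => ∃ k, (b k : ℤ) ∣ ((n : ℤ) - r k))).card : ℚ) /
          ((Finset.univ.lcm b : ℕ) : ℚ)) ≥
    ((((Finset.Icc 1 (Finset.univ.lcm b)).filter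
        (fun n => ∃ k, b k ∣ n)).card : ℚ) / ((Finset.univ.lcm b : ℕ) : ℚ)) :=
  stmt_13_general K b r
end

section
/- Let β, r, n, c_1,...,c_m ∈ ℕ, and let p > n be a prime dividing c_1,...,c_k but not dividing c_{k+1},...,c_m nor β. Then d((βℤ + r) ∩ ⋂_{i=1}^n (F_{{c_1,...,c_m}} − i)) ≥ (1 − n/p)·d((βℤ + r) ∩ ⋂_{i=1}^n (F_{{c_{k+1},...,c_m}} − i)), where F_S = ℤ \ ⋃_{s∈S} sℤ. -/
/-!
Every set involved is periodic, so its density is read off one period. Put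
`M = β ∏_{j ≥ k} c_j`, which is prime to `p`. The set `B` on the right-hand side is `M`-periodic,
and the set `Q` of `z` with `p ∤ z + i` for `1 ≤ i ≤ n` is `p`-periodic and misses at most `n`
residues modulo `p`. By the Chinese remainder theorem `Q ∩ B` has density
`d(Q) d(B) ≥ (1 - n/p) d(B)`, and `Q ∩ B` lies in the set on the left-hand side because `p ∣ c_j`
for `j < k`.
-/

open Finset Function Filter Topology

open scoped Classical in
/-- `E ⊆ ℤ` has natural density `δ` (counting the positive part `[1, N]`). -/
def hasDensity (E : Set ℤ) (δ : ℝ) : Prop :=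
  Filter.Tendsto (fun N : ℕ =>
      (((Finset.Icc 1 N).filter (fun i => (i : ℤ) ∈ E)).card : ℝ) / (N : ℝ))
    Filter.atTop (nhds δ)

namespace Nat

variable {P Q : ℕ → Prop} [DecidablePred P] [DecidablePred Q] {L : ℕ}

theorem count_mul_add_of_periodic (hP : Periodic P L) (q r : ℕ) :
    count P (q * L + r) = q * count P L + count P r := by
  induction q with
  | zero => simp
  | succ q ih =>
    have hshift : (fun k => P (L + k)) = P := funext fun k => by rw [add_comm, hP]
    rw [add_mul, one_mul, add_right_comm, add_comm _ L, count_add]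
    simp only [hshift, ih]
    ring

theorem abs_count_sub_le_of_periodic (hP : Periodic P L) (hL : 0 < L) (N : ℕ) :
    |(count P N : ℝ) - N * count P L / L| ≤ L := by
  obtain ⟨q, r, hr, rfl⟩ : ∃ q r, r < L ∧ N = q * L + r :=
    ⟨N / L, N % L, mod_lt N hL, (div_add_mod' N L).symm⟩
  have hL' : (0 : ℝ) < L := by exact_mod_cast hL
  have hcL : (count P L : ℝ) ≤ L := by exact_mod_cast count_le _
  have hcr : (count P r : ℝ) ≤ r := by exact_mod_cast count_le _
  have hrL : (r : ℝ) < L := by exact_mod_cast hr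
  have key : (count P (q * L + r) : ℝ) - ↑(q * L + r) * count P L / L
      = count P r - r * (count P L / L) := by
    rw [count_mul_add_of_periodic hP]; push_cast; field_simp; ring
  have h0 : r * (count P L / L : ℝ) ≤ r :=
    mul_le_of_le_one_right (cast_nonneg r) ((div_le_one hL').2 hcL)
  have h1 : 0 ≤ r * (count P L / L : ℝ) := by positivity
  rw [key, abs_le]
  constructor <;> linarith [cast_nonneg (α := ℝ) (count P r)]

theorem tendsto_count_div_of_periodic (hP : Periodic P L) (hL : 0 < L) :
    Tendsto (fun N => (count P N : ℝ) / N) atTop (𝓝 (count P L / L)) := by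
  rw [tendsto_iff_norm_sub_tendsto_zero]
  refine squeeze_zero' (Eventually.of_forall fun N => norm_nonneg _) ?_
    (tendsto_const_div_atTop_nhds_zero_nat (L : ℝ))
  filter_upwards [eventually_gt_atTop 0] with N hN
  have hN' : (0 : ℝ) < N := by exact_mod_cast hN
  rw [Real.norm_eq_abs, show (count P N : ℝ) / N - count P L / L
    = ((count P N : ℝ) - N * count P L / L) / N by field_simp, abs_div, abs_of_pos hN']
  exact div_le_div_of_nonneg_right (abs_count_sub_le_of_periodic hP hL N) hN'.le

theorem count_and_eq_mul_of_coprime {a b : ℕ} (hab : Coprime a b) (hP : Periodic P a)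
    (hQ : Periodic Q b) : count (fun x => P x ∧ Q x) (a * b) = count P a * count Q b := by
  rcases eq_or_ne a 0 with rfl | ha
  · simp
  rcases eq_or_ne b 0 with rfl | hb
  · simp
  simp only [count_eq_card_filter_range, ← card_product]
  have hcr_mod (u v : ℕ) : chineseRemainder hab u v % a = u % a ∧
      chineseRemainder hab u v % b = v % b := (chineseRemainder hab u v).prop
  refine card_nbij' (fun x => (x % a, x % b)) (fun y => chineseRemainder hab y.1 y.2)
    ?_ ?_ ?_ ?_
  · intro x hx
    simp only [coe_filter, mem_range, coe_product, Set.mem_prod, Set.mem_ofPred_eq] at hx ⊢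
    exact ⟨⟨mod_lt x (pos_of_ne_zero ha), (hP.map_mod_nat x).symm ▸ hx.2.1⟩,
      mod_lt x (pos_of_ne_zero hb), (hQ.map_mod_nat x).symm ▸ hx.2.2⟩
  · rintro ⟨u, v⟩ huv
    simp only [coe_filter, mem_range, coe_product, Set.mem_prod, Set.mem_ofPred_eq] at huv ⊢
    obtain ⟨⟨hu, hPu⟩, hv, hQv⟩ := huv
    obtain ⟨hcu, hcv⟩ := hcr_mod u v
    refine ⟨chineseRemainder_lt_mul hab u v ha hb, ?_, ?_⟩
    · rwa [← hP.map_mod_nat, hcu, mod_eq_of_lt hu]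
    · rwa [← hQ.map_mod_nat, hcv, mod_eq_of_lt hv]
  · intro x hx
    simp only [coe_filter, mem_range, Set.mem_ofPred_eq] at hx
    exact (chineseRemainder_modEq_unique hab (mod_modEq x a).symm (mod_modEq x b).symm).symm
      |>.eq_of_lt_of_lt (chineseRemainder_lt_mul hab _ _ ha hb) hx.1
  · rintro ⟨u, v⟩ huv
    simp only [coe_product, coe_filter, mem_range, Set.mem_prod, Set.mem_ofPred_eq] at huv
    obtain ⟨hcu, hcv⟩ := hcr_mod u v
    simp only [hcu, hcv, mod_eq_of_lt huv.1.1, mod_eq_of_lt huv.2.1]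

theorem count_comp_add_one_of_periodic (hP : Periodic P L) :
    count (fun k => P (k + 1)) L = count P L := by
  have h := count_succ' (p := P) L
  rw [count_succ] at h
  simp only [hP.eq] at h
  omega

theorem card_filter_Icc_one_eq_count (N : ℕ) :
    #{i ∈ Icc 1 N | P i} = count (fun k => P (k + 1)) N := by
  induction N with
  | zero => simp
  | succ N ih =>
    rw [count_succ, ← ih, ← insert_Icc_right_eq_Icc_add_one (by omega), filter_insert]
    split_ifs <;> simp_all

theorem sub_le_count_not_dvd_add (p n : ℕ) :
    p - n ≤ count (fun x => ∀ i ∈ Icc 1 n, ¬ p ∣ x + i) p := by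
  have hfiber (i : ℕ) : #{x ∈ range p | p ∣ x + i} ≤ 1 := by
    refine card_le_one.2 fun x hx y hy => ?_
    simp only [mem_filter, mem_range] at hx hy
    exact ((modEq_zero_iff_dvd.2 hx.2).trans (modEq_zero_iff_dvd.2 hy.2).symm
      |>.add_right_cancel' i).eq_of_lt_of_lt hx.1 hy.1
  have hbad : #{x ∈ range p | ¬ ∀ i ∈ Icc 1 n, ¬ p ∣ x + i} ≤ n := by
    calc #{x ∈ range p | ¬ ∀ i ∈ Icc 1 n, ¬ p ∣ x + i}
        ≤ #((Icc 1 n).biUnion fun i => {x ∈ range p | p ∣ x + i}) := by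
          refine card_le_card fun x hx => ?_
          simp only [mem_filter, not_forall, not_not, mem_biUnion] at hx ⊢
          obtain ⟨hx, i, hi, hdvd⟩ := hx
          exact ⟨i, hi, hx, hdvd⟩
      _ ≤ #(Icc 1 n) * 1 := card_biUnion_le_card_mul _ _ _ fun i _ => hfiber i
      _ = n := by simp
  have hsplit := card_filter_add_card_filter_not (s := range p)
    (fun x => ∀ i ∈ Icc 1 n, ¬ p ∣ x + i)
  rw [card_range] at hsplit
  rw [count_eq_card_filter_range]
  omega

end Nat

open scoped Classical in
/-- The density of a set `E ⊆ ℤ` whose trace on `ℕ` has period `L`, read off one period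
(meaningless for other `L`). -/
noncomputable def periodicDensity (E : Set ℤ) (L : ℕ) : ℝ :=
  Nat.count (fun x : ℕ => (x : ℤ) ∈ E) L / L

section PeriodicDensity

variable {E F : Set ℤ} {L M : ℕ}

open scoped Classical in
theorem hasDensity_periodicDensity (hL : 0 < L) (hE : Periodic (fun x : ℕ => (x : ℤ) ∈ E) L) :
    hasDensity E (periodicDensity E L) := by
  -- in `hasDensity`, `Finset.Icc 1 N` is coerced to a `Finset ℤ` through the monad structure
  have hcard (N : ℕ) : #{i ∈ (Icc 1 N >>= fun a => (pure (a : ℤ) : Finset ℤ)) | i ∈ E}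
      = Nat.count (fun x : ℕ => ((x + 1 : ℕ) : ℤ) ∈ E) N := by
    have hbind : (Icc 1 N >>= fun a => (pure (a : ℤ) : Finset ℤ)) =
        (Icc 1 N).map Nat.castEmbedding := by
      ext; simp [Finset.bind_def]
    rw [← Nat.card_filter_Icc_one_eq_count (P := fun x : ℕ => (x : ℤ) ∈ E), hbind, filter_map,
      card_map]
    rfl
  unfold hasDensity periodicDensity
  simp only [hcard]
  rw [← Nat.count_comp_add_one_of_periodic hE]
  exact Nat.tendsto_count_div_of_periodic (hE.add_const 1) hL

open scoped Classical in
theorem hasDensity.le_of_subset {δ ε : ℝ} (hEF : E ⊆ F) (hE : hasDensity E δ)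
    (hF : hasDensity F ε) : δ ≤ ε :=
  le_of_tendsto_of_tendsto' hE hF fun N => div_le_div_of_nonneg_right
    (by exact_mod_cast card_le_card (monotone_filter_right _ fun _ _ h => hEF h)) N.cast_nonneg

theorem periodicDensity_le_of_subset (hEF : E ⊆ F)
    (hL : 0 < L) (hE : Periodic (fun x : ℕ => (x : ℤ) ∈ E) L)
    (hM : 0 < M) (hF : Periodic (fun x : ℕ => (x : ℤ) ∈ F) M) :
    periodicDensity E L ≤ periodicDensity F M :=
  (hasDensity_periodicDensity hL hE).le_of_subset hEF (hasDensity_periodicDensity hM hF)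

theorem periodic_natCast_mem_inter (hE : Periodic (fun x : ℕ => (x : ℤ) ∈ E) L)
    (hF : Periodic (fun x : ℕ => (x : ℤ) ∈ F) M) :
    Periodic (fun x : ℕ => (x : ℤ) ∈ E ∩ F) (L * M) :=
  fun x => congrArg₂ And ((mul_comm M L ▸ hE.nat_mul M) x) (hF.nat_mul L x)

theorem periodicDensity_inter_of_coprime (hLM : L.Coprime M)
    (hE : Periodic (fun x : ℕ => (x : ℤ) ∈ E) L) (hF : Periodic (fun x : ℕ => (x : ℤ) ∈ F) M) :
    periodicDensity (E ∩ F) (L * M) = periodicDensity E L * periodicDensity F M := by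
  classical
  unfold periodicDensity
  rw [div_mul_div_comm, ← Nat.cast_mul, ← Nat.cast_mul,
    ← Nat.count_and_eq_mul_of_coprime hLM hE hF]
  congr

end PeriodicDensity

theorem periodic_natCast_mem_sieve {ι : Type*} (β r : ℕ) (s : Finset ℕ) (c : ι → ℕ)
    (J : ι → Prop) {T : ℕ} (hβ : β ∣ T) (hc : ∀ j, J j → c j ∣ T) :
    Periodic (fun x : ℕ => (x : ℤ) ∈
      {z : ℤ | (β : ℤ) ∣ z - r ∧ ∀ i ∈ s, ∀ j, J j → ¬ (c j : ℤ) ∣ z + i}) T := by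
  have hcT (j : ι) (hj : J j) (b : ℤ) : (c j : ℤ) ∣ b + T ↔ (c j : ℤ) ∣ b :=
    dvd_add_left (Int.natCast_dvd_natCast.2 (hc j hj))
  intro x
  simp +contextual only [Set.mem_ofPred_eq, Nat.cast_add, add_right_comm _ (T : ℤ),
    add_sub_right_comm _ (T : ℤ), dvd_add_left (Int.natCast_dvd_natCast.2 hβ), hcT]

theorem periodic_natCast_mem_avoid (p : ℕ) (s : Finset ℕ) :
    Periodic (fun x : ℕ => (x : ℤ) ∈ {z : ℤ | ∀ i ∈ s, ¬ (p : ℤ) ∣ z + i}) p := fun x => by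
  simp only [Set.mem_ofPred_eq, Nat.cast_add, add_right_comm _ (p : ℤ),
    dvd_add_left (dvd_refl (p : ℤ))]

theorem avoid_inter_sieve_subset {ι : Type*} (β r p : ℕ) (s : Finset ℕ) (c : ι → ℕ)
    (J : ι → Prop) (hJ : ∀ j, ¬ J j → p ∣ c j) :
    {z : ℤ | ∀ i ∈ s, ¬ (p : ℤ) ∣ z + i} ∩
        {z : ℤ | (β : ℤ) ∣ z - r ∧ ∀ i ∈ s, ∀ j, J j → ¬ (c j : ℤ) ∣ z + i} ⊆
      {z : ℤ | (β : ℤ) ∣ z - r ∧ ∀ i ∈ s, ∀ j, ¬ (c j : ℤ) ∣ z + i} := by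
  rintro z ⟨hpz, hβz, hcz⟩
  refine ⟨hβz, fun i hi j hcj => ?_⟩
  by_cases hj : J j
  · exact hcz i hi j hj hcj
  · exact hpz i hi ((Int.natCast_dvd_natCast.2 (hJ j hj)).trans hcj)

theorem one_sub_div_le_periodicDensity_avoid {p : ℕ} (hp : 0 < p) (n : ℕ) :
    1 - (n : ℝ) / p ≤ periodicDensity {z : ℤ | ∀ i ∈ Icc 1 n, ¬ (p : ℤ) ∣ z + i} p := by
  have hp' : (0 : ℝ) < p := by exact_mod_cast hp
  unfold periodicDensity
  rw [one_sub_div hp'.ne']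
  gcongr
  calc (p : ℝ) - n ≤ (p - n : ℕ) := sub_le_iff_le_add.2 (by exact_mod_cast le_tsub_add)
    _ ≤ Nat.count (fun x => ∀ i ∈ Icc 1 n, ¬ p ∣ x + i) p := by
      exact_mod_cast Nat.sub_le_count_not_dvd_add p n
    _ = _ := by
      congr 2
      ext x
      simp only [Set.mem_ofPred_eq, ← Nat.cast_add, Int.natCast_dvd_natCast]

theorem stmt_15_general (β r n : ℕ) (hβ : 0 < β) (m k : ℕ)
    (c : Fin m → ℕ) (hc : ∀ j, 0 < c j)
    (p : ℕ) (hp : p.Prime) (hpβ : ¬ p ∣ β)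
    (hdvd : ∀ j : Fin m, ((j : ℕ) < k → p ∣ c j) ∧ (k ≤ (j : ℕ) → ¬ p ∣ c j)) :
    ∃ d₁ d₂ : ℝ,
      hasDensity {z : ℤ | (β : ℤ) ∣ (z - r) ∧
          ∀ i ∈ Finset.Icc 1 n, ∀ j : Fin m, ¬ (c j : ℤ) ∣ (z + (i : ℤ))} d₁ ∧
      hasDensity {z : ℤ | (β : ℤ) ∣ (z - r) ∧
          ∀ i ∈ Finset.Icc 1 n, ∀ j : Fin m, k ≤ (j : ℕ) →
            ¬ (c j : ℤ) ∣ (z + (i : ℤ))} d₂ ∧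
      d₁ ≥ (1 - (n : ℝ) / (p : ℝ)) * d₂ := by
  set A : Set ℤ := {z : ℤ | (β : ℤ) ∣ z - r ∧ ∀ i ∈ Icc 1 n, ∀ j, ¬ (c j : ℤ) ∣ z + i}
  set B : Set ℤ :=
    {z : ℤ | (β : ℤ) ∣ z - r ∧ ∀ i ∈ Icc 1 n, ∀ j : Fin m, k ≤ (j : ℕ) → ¬ (c j : ℤ) ∣ z + i}
  set Q : Set ℤ := {z : ℤ | ∀ i ∈ Icc 1 n, ¬ (p : ℤ) ∣ z + i}
  set C := β * ∏ j, c j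
  set M := β * ∏ j : Fin m with k ≤ j.val, c j
  have hC : 0 < C := Nat.mul_pos hβ (prod_pos fun j _ => hc j)
  have hM : 0 < M := Nat.mul_pos hβ (prod_pos fun j _ => hc j)
  have hA : Periodic (fun x : ℕ => (x : ℤ) ∈ A) C := by
    simpa only [true_implies] using periodic_natCast_mem_sieve β r (Icc 1 n) c (fun _ => True)
      (dvd_mul_right β _) fun j _ => (dvd_prod_of_mem c (mem_univ j)).mul_left β
  have hB : Periodic (fun x : ℕ => (x : ℤ) ∈ B) M :=
    periodic_natCast_mem_sieve β r (Icc 1 n) c _ (dvd_mul_right β _)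
      fun j hj => (dvd_prod_of_mem c (mem_filter.2 ⟨mem_univ j, hj⟩)).mul_left β
  have hQ : Periodic (fun x : ℕ => (x : ℤ) ∈ Q) p := periodic_natCast_mem_avoid p (Icc 1 n)
  have hpM : p.Coprime M := (hp.coprime_iff_not_dvd.2 hpβ).mul_right <|
    Nat.coprime_prod_right_iff.2 fun j hj =>
      hp.coprime_iff_not_dvd.2 ((hdvd j).2 (mem_filter.1 hj).2)
  have hQB : Q ∩ B ⊆ A :=
    avoid_inter_sieve_subset β r p _ c _ fun j hj => (hdvd j).1 (Nat.lt_of_not_le hj)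
  refine ⟨periodicDensity A C, periodicDensity B M, hasDensity_periodicDensity hC hA,
    hasDensity_periodicDensity hM hB, ?_⟩
  calc (1 - (n : ℝ) / p) * periodicDensity B M
      ≤ periodicDensity Q p * periodicDensity B M := by
        gcongr
        · unfold periodicDensity; positivity
        · exact one_sub_div_le_periodicDensity_avoid hp.pos n
    _ = periodicDensity (Q ∩ B) (p * M) := (periodicDensity_inter_of_coprime hpM hQ hB).symm
    _ ≤ periodicDensity A C := periodicDensity_le_of_subset hQB (Nat.mul_pos hp.pos hM)
        (periodic_natCast_mem_inter hQ hB) hC hA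

/-- Let `β, r, n, c_1, ..., c_m ∈ ℕ`, and let `p > n` be a prime
dividing `c_1, ..., c_k` but not `c_{k+1}, ..., c_m` nor `β`.  Then
`d((βℤ+r) ∩ ⋂_{i=1}^n (F_{{c_1,...,c_m}} − i))
  ≥ (1 − n/p)·d((βℤ+r) ∩ ⋂_{i=1}^n (F_{{c_{k+1},...,c_m}} − i))`,
where `F_S = ℤ \ ⋃_{s∈S} sℤ`. -/
theorem stmt_15 (β r n : ℕ) (hβ : 0 < β) (m k : ℕ) (hk : k ≤ m)
    (c : Fin m → ℕ) (hc : ∀ j, 0 < c j)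
    (p : ℕ) (hp : p.Prime) (hpn : n < p) (hpβ : ¬ p ∣ β)
    (hdvd : ∀ j : Fin m, ((j : ℕ) < k → p ∣ c j) ∧ (k ≤ (j : ℕ) → ¬ p ∣ c j)) :
    ∃ d₁ d₂ : ℝ,
      hasDensity {z : ℤ | (β : ℤ) ∣ (z - r) ∧
          ∀ i ∈ Finset.Icc 1 n, ∀ j : Fin m, ¬ (c j : ℤ) ∣ (z + (i : ℤ))} d₁ ∧
      hasDensity {z : ℤ | (β : ℤ) ∣ (z - r) ∧
          ∀ i ∈ Finset.Icc 1 n, ∀ j : Fin m, k ≤ (j : ℕ) →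
            ¬ (c j : ℤ) ∣ (z + (i : ℤ))} d₂ ∧
      d₁ ≥ (1 - (n : ℝ) / (p : ℝ)) * d₂ :=
  stmt_15_general β r n hβ m k c hc p hp hpβ hdvd
end
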